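/- Let ν be p-symmetric with minimal factorization ν·w = (p^k - 1)·ℓ (i.e., w is minimal among all carry-free witnesses) and let e be the number of base-p digits of w minus 1 (the shift factor). Then k ≥ e + 1 and ℓ·p^{k-e-1} < ν. -/

import Mathlib

/-- Sum of the base-`p` digits of `n`. -/
def digitSum (p n : ℕ) : ℕ := (Nat.digits p n).sum

/-- An integer `ν > 1` coprime to `p` is `p`-symmetric if there exist positive
integers `w`, `k`, `ℓ` with `ℓ < p^k` such that `ν * w = (p^k - 1) * ℓ` and the
base-`p` product `ν * w` is carry-free, i.e. `s_p(ν*w) = s_p(ν) * s_p(w)`. -/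
def IsPSymmetric (p ν : ℕ) : Prop :=
  1 < ν ∧ Nat.Coprime ν p ∧
    ∃ w k ℓ : ℕ, 0 < w ∧ 0 < k ∧ 0 < ℓ ∧ ℓ < p ^ k ∧
      ν * w = (p ^ k - 1) * ℓ ∧
      digitSum p (ν * w) = digitSum p ν * digitSum p w

/-!
Write `w = p ^ k * a + b` with `b < p ^ k`. As `p ^ k ≡ 1 [MOD p ^ k - 1]`, the fold `a + b` is
again a factor: `ν * (a + b) = (p ^ k - 1) * (ℓ - ν * a)`. Every `(p ^ k - 1) * m` with
`0 < m ≤ p ^ k` has digit sum `k * (p - 1)`, and `s_p` is subadditive and submultiplicative, so the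
fold is still carry-free. Minimality of `w` therefore forces `w < p ^ k`, whence `ℓ ≤ ν`; and
`ℓ = ν` would give `w = p ^ k - 1` and `s_p(ν) = 1`, impossible for `ν > 1` prime to `p`.
So `ℓ < ν`, hence `w < p ^ k - 1` has `e + 1 ≤ k` digits, `p ^ (k - e - 1) * w < p ^ k - 1`, and
multiplying by `ℓ` gives `ℓ * p ^ (k - e - 1) * w < ν * w`.
-/

open Nat

section DigitSum

variable {p : ℕ}

@[simp] lemma digitSum_zero : digitSum p 0 = 0 := by simp [digitSum]

lemma digitSum_pos {n : ℕ} (hn : n ≠ 0) : 0 < digitSum p n :=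
  (Nat.pos_of_ne_zero (getLast_digit_ne_zero p hn)).trans_le
    (List.le_sum_of_mem (List.getLast_mem _))

lemma digitSum_add_base_mul (hp : 1 < p) {d : ℕ} (hd : d < p) (n : ℕ) :
    digitSum p (d + p * n) = d + digitSum p n := by
  by_cases h : d = 0 ∧ n = 0
  · simp [h.1, h.2]
  · rw [digitSum, digits_add p hp d n hd (not_and_or.mp h), List.sum_cons, digitSum]

lemma digitSum_base_mul (hp : 1 < p) (n : ℕ) : digitSum p (p * n) = digitSum p n := by
  simpa using digitSum_add_base_mul hp (by omega : 0 < p) n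

lemma digitSum_eq_mod_add_digitSum_div (hp : 1 < p) (n : ℕ) :
    digitSum p n = n % p + digitSum p (n / p) := by
  conv_lhs => rw [← mod_add_div n p]
  exact digitSum_add_base_mul hp (mod_lt n (by omega)) _

lemma digitSum_add_base_pow_mul (hp : 1 < p) {k b : ℕ} (hb : b < p ^ k) (a : ℕ) :
    digitSum p (b + p ^ k * a) = digitSum p b + digitSum p a := by
  rcases eq_or_ne a 0 with rfl | ha
  · simp
  have hlen : (p.digits b).length ≤ k := (digits_length_le_iff hp b).mpr hb
  have h := digits_append_zeroes_append_digits (k := k - (p.digits b).length) (n := b) hp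
    (Nat.pos_of_ne_zero ha)
  rw [Nat.add_sub_cancel' hlen] at h
  simp [digitSum, ← h]

lemma digitSum_mod_add_digitSum_div (hp : 1 < p) (k n : ℕ) :
    digitSum p (n % p ^ k) + digitSum p (n / p ^ k) = digitSum p n := by
  rw [← digitSum_add_base_pow_mul hp (mod_lt n (by positivity)), mod_add_div]

/-- By Legendre's formula `(p - 1) * v_p(n!) = n - s_p(n)`, this is
`v_p(m! n!) ≤ v_p((m + n)!)`. -/
lemma digitSum_add_le (hp : p.Prime) (m n : ℕ) :
    digitSum p (m + n) ≤ digitSum p m + digitSum p n := by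
  have := Fact.mk hp
  have hv : padicValNat p (m ! * n !) ≤ padicValNat p (m + n)! :=
    (padicValNat_dvd_iff_le (factorial_ne_zero _)).mp
      ((pow_padicValNat_dvd).trans (factorial_mul_factorial_dvd_factorial_add m n))
  rw [padicValNat.mul (factorial_ne_zero _) (factorial_ne_zero _)] at hv
  have hmn := sub_one_mul_padicValNat_factorial (p := p) (m + n)
  have hm := sub_one_mul_padicValNat_factorial (p := p) m
  have hn := sub_one_mul_padicValNat_factorial (p := p) n
  have hle := Nat.mul_le_mul_left (p - 1) hv
  rw [mul_add] at hle
  have := digit_sum_le p m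
  have := digit_sum_le p n
  have := digit_sum_le p (m + n)
  unfold digitSum
  omega

lemma digitSum_mul_le_mul_digitSum (hp : p.Prime) (d n : ℕ) :
    digitSum p (d * n) ≤ d * digitSum p n := by
  induction d with
  | zero => simp
  | succ d ih =>
    calc digitSum p ((d + 1) * n) ≤ digitSum p (d * n) + digitSum p n := by
          rw [succ_mul]; exact digitSum_add_le hp _ _
      _ ≤ (d + 1) * digitSum p n := by rw [succ_mul]; omega

lemma digitSum_ofDigits_mul_le (hp : p.Prime) (L : List ℕ) (n : ℕ) :
    digitSum p (ofDigits p L * n) ≤ L.sum * digitSum p n := by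
  induction L with
  | nil => simp [ofDigits]
  | cons d L ih =>
    calc digitSum p (ofDigits p (d :: L) * n)
        ≤ digitSum p (d * n) + digitSum p (p * (ofDigits p L * n)) := by
          rw [ofDigits_cons, add_mul, mul_assoc]; exact digitSum_add_le hp _ _
      _ ≤ d * digitSum p n + L.sum * digitSum p n := by
          rw [digitSum_base_mul hp.one_lt]
          exact Nat.add_le_add (digitSum_mul_le_mul_digitSum hp d n) ih
      _ = (d :: L).sum * digitSum p n := by rw [List.sum_cons, add_mul]

lemma digitSum_mul_le (hp : p.Prime) (m n : ℕ) :
    digitSum p (m * n) ≤ digitSum p m * digitSum p n := by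
  have h := digitSum_ofDigits_mul_le hp (p.digits m) n
  rwa [ofDigits_digits] at h

lemma digitSum_add_digitSum_pow_sub_one_sub (hp : 1 < p) (k : ℕ) {x : ℕ} (hx : x < p ^ k) :
    digitSum p x + digitSum p (p ^ k - 1 - x) = k * (p - 1) := by
  induction k generalizing x with
  | zero => simp_all
  | succ k ih =>
    have hd : x % p < p := mod_lt x (by omega)
    have hy : x / p < p ^ k := Nat.div_lt_of_lt_mul (by rwa [← pow_succ'])
    have hsplit : p ^ (k + 1) - 1 - x = (p - 1 - x % p) + p * (p ^ k - 1 - x / p) := by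
      have h1 : p * (p ^ k - 1 - x / p) + p * (x / p) + p = p ^ (k + 1) := by
        rw [← mul_add, ← Nat.mul_add_one, pow_succ']
        congr 1
        omega
      have h2 := mod_add_div x p
      omega
    rw [hsplit, digitSum_add_base_mul hp (by omega), digitSum_eq_mod_add_digitSum_div hp x]
    have := ih hy
    rw [succ_mul]
    omega

lemma digitSum_pow_sub_one_mul (hp : 1 < p) (k : ℕ) {m : ℕ} (hm : 0 < m) (hmk : m ≤ p ^ k) :
    digitSum p ((p ^ k - 1) * m) = k * (p - 1) := by
  have h : (p ^ k - 1) * m = (p ^ k - 1 - (m - 1)) + p ^ k * (m - 1) := by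
    zify [one_le_pow k p (by omega), hm, hmk, Nat.sub_le_sub_right hmk 1]
    ring
  rw [h, digitSum_add_base_pow_mul hp (by omega), add_comm]
  exact digitSum_add_digitSum_pow_sub_one_sub hp k (by omega)

lemma one_lt_digitSum (hp : 1 < p) {n : ℕ} (hn : 1 < n) (hpn : ¬p ∣ n) : 1 < digitSum p n := by
  rw [digitSum_eq_mod_add_digitSum_div hp]
  have hmod : n % p ≠ 0 := fun h => hpn (dvd_of_mod_eq_zero h)
  rcases eq_or_ne (n / p) 0 with h | h
  · rw [h, digitSum_zero, mod_eq_of_lt ((div_eq_zero_iff_lt (by omega)).mp h)]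
    omega
  · have := digitSum_pos (p := p) h
    omega

end DigitSum

section Fold

variable {ν w ℓ q : ℕ}

lemma mul_div_lt_of_mul_eq (hq : 0 < q) (hℓ : 0 < ℓ) (h : ν * w = (q - 1) * ℓ) :
    ν * (w / q) < ℓ := by
  refine Nat.lt_of_mul_lt_mul_right (a := q) ?_
  calc ν * (w / q) * q ≤ ν * w := by
        rw [mul_assoc]; exact Nat.mul_le_mul_left _ (div_mul_le_self w q)
    _ = (q - 1) * ℓ := h
    _ < q * ℓ := Nat.mul_lt_mul_of_pos_right (sub_lt hq one_pos) hℓ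
    _ = ℓ * q := mul_comm _ _

/-- Since `q ≡ 1 [MOD q - 1]`, folding `w = q * a + b` to `a + b` keeps `ν * w` a multiple of
`q - 1`. -/
lemma mul_div_add_mod_eq (hq : 0 < q) (hℓ : 0 < ℓ) (h : ν * w = (q - 1) * ℓ) :
    ν * (w / q + w % q) = (q - 1) * (ℓ - ν * (w / q)) := by
  have hlt := mul_div_lt_of_mul_eq hq hℓ h
  have hw := div_add_mod w q
  zify [hq, hlt.le] at h hw ⊢
  rw [← hw] at h
  linear_combination h

end Fold

section MinimalFactorization

variable {p ν w k ℓ : ℕ}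

lemma pos_of_lt_pow (hℓ : 0 < ℓ) (hℓlt : ℓ < p ^ k) : 0 < k :=
  Nat.pos_of_ne_zero fun hk => by simp [hk] at hℓlt; omega

lemma lt_pow_of_minimal (hp : p.Prime) (hℓ : 0 < ℓ) (hℓlt : ℓ < p ^ k)
    (hfac : ν * w = (p ^ k - 1) * ℓ)
    (hcf : digitSum p (ν * w) = digitSum p ν * digitSum p w)
    (hmin : ∀ w' k' ℓ' : ℕ, 0 < w' → 0 < k' → 0 < ℓ' → ℓ' < p ^ k' →
      ν * w' = (p ^ k' - 1) * ℓ' →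
      digitSum p (ν * w') = digitSum p ν * digitSum p w' → w ≤ w') :
    w < p ^ k := by
  have hk := pos_of_lt_pow hℓ hℓlt
  have hpk : 1 < p ^ k := one_lt_pow hk.ne' hp.one_lt
  by_contra! hw
  have ha : 0 < w / p ^ k := div_pos hw (by omega)
  have hfold := mul_div_add_mod_eq (by omega) hℓ hfac
  have hL := Nat.sub_pos_of_lt (mul_div_lt_of_mul_eq (by omega) hℓ hfac)
  have hLlt : ℓ - ν * (w / p ^ k) < p ^ k := (Nat.sub_le _ _).trans_lt hℓlt
  have hs : digitSum p (ν * (w / p ^ k + w % p ^ k)) = digitSum p (ν * w) := by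
    rw [hfold, hfac, digitSum_pow_sub_one_mul hp.one_lt k hL hLlt.le,
      digitSum_pow_sub_one_mul hp.one_lt k hℓ hℓlt.le]
  have hcf' : digitSum p (ν * (w / p ^ k + w % p ^ k)) =
      digitSum p ν * digitSum p (w / p ^ k + w % p ^ k) := by
    refine le_antisymm (digitSum_mul_le hp _ _) ?_
    calc digitSum p ν * digitSum p (w / p ^ k + w % p ^ k)
        ≤ digitSum p ν * (digitSum p (w % p ^ k) + digitSum p (w / p ^ k)) := by
          rw [add_comm (w / p ^ k)]; exact Nat.mul_le_mul_left _ (digitSum_add_le hp _ _)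
      _ = digitSum p (ν * (w / p ^ k + w % p ^ k)) := by
          rw [digitSum_mod_add_digitSum_div hp.one_lt, ← hcf, hs]
  have hle := hmin _ k _ (Nat.add_pos_left ha _) hk hL hLlt hfold hcf'
  have hw' := div_add_mod w (p ^ k)
  have : w / p ^ k < p ^ k * (w / p ^ k) := lt_mul_left ha hpk
  omega

lemma lt_of_minimal (hp : p.Prime) (h1 : 1 < ν) (hco : ν.Coprime p) (hℓ : 0 < ℓ)
    (hℓlt : ℓ < p ^ k) (hfac : ν * w = (p ^ k - 1) * ℓ)
    (hcf : digitSum p (ν * w) = digitSum p ν * digitSum p w)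
    (hmin : ∀ w' k' ℓ' : ℕ, 0 < w' → 0 < k' → 0 < ℓ' → ℓ' < p ^ k' →
      ν * w' = (p ^ k' - 1) * ℓ' →
      digitSum p (ν * w') = digitSum p ν * digitSum p w' → w ≤ w') :
    ℓ < ν := by
  have hk := pos_of_lt_pow hℓ hℓlt
  have hpk : 1 < p ^ k := one_lt_pow hk.ne' hp.one_lt
  have hwk := lt_pow_of_minimal hp hℓ hℓlt hfac hcf hmin
  have hle : ℓ ≤ ν := by
    refine Nat.le_of_mul_le_mul_left ?_ (by omega : 0 < p ^ k - 1)
    rw [← hfac, mul_comm _ ν]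
    exact Nat.mul_le_mul_left ν (Nat.le_sub_one_of_lt hwk)
  refine lt_of_le_of_ne hle fun hℓν => ?_
  subst hℓν
  have hw : w = p ^ k - 1 := Nat.eq_of_mul_eq_mul_left hℓ (by rw [hfac, mul_comm])
  have hsw : digitSum p w = k * (p - 1) := by
    simpa [hw] using digitSum_pow_sub_one_mul hp.one_lt k one_pos hpk.le
  have hkp : 0 < k * (p - 1) := Nat.mul_pos hk (by have := hp.one_lt; omega)
  rw [hfac, digitSum_pow_sub_one_mul hp.one_lt k hℓ hℓlt.le, hsw] at hcf
  have hs1 : digitSum p ℓ = 1 :=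
    Nat.eq_of_mul_eq_mul_right hkp (hcf.symm.trans (one_mul _).symm)
  exact (one_lt_digitSum hp.one_lt h1 ((hp.coprime_iff_not_dvd).mp hco.symm)).ne' hs1

end MinimalFactorization

lemma pow_sub_mul_lt_pow_sub_one {p e k w : ℕ} (hp : 1 < p) (hek : e < k)
    (hwe : w < p ^ (e + 1)) (hwk : w < p ^ k - 1) : p ^ (k - e - 1) * w < p ^ k - 1 := by
  rcases (k - e - 1).eq_zero_or_pos with hj | hj
  · simpa [hj] using hwk
  have hpj : p ≤ p ^ (k - e - 1) := le_self_pow₀ hp.le hj.ne'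
  have hjk : p ^ (k - e - 1) < p ^ k := pow_lt_pow_right₀ hp (by omega)
  have hsplit : p ^ (k - e - 1) * p ^ (e + 1) = p ^ k := by rw [← pow_add]; congr 1; omega
  calc p ^ (k - e - 1) * w ≤ p ^ (k - e - 1) * (p ^ (e + 1) - 1) :=
        Nat.mul_le_mul_left _ (by omega)
    _ = p ^ k - p ^ (k - e - 1) := by rw [Nat.mul_sub, mul_one, hsplit]
    _ < p ^ k - 1 := by omega

theorem shift_factor_bound_general (p ν w k ℓ : ℕ) (hp : p.Prime)
    (h1 : 1 < ν) (hco : Nat.Coprime ν p)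
    (hℓ : 0 < ℓ) (hℓlt : ℓ < p ^ k)
    (hfac : ν * w = (p ^ k - 1) * ℓ)
    (hcf : digitSum p (ν * w) = digitSum p ν * digitSum p w)
    (hmin : ∀ w' k' ℓ' : ℕ, 0 < w' → 0 < k' → 0 < ℓ' → ℓ' < p ^ k' →
      ν * w' = (p ^ k' - 1) * ℓ' →
      digitSum p (ν * w') = digitSum p ν * digitSum p w' → w ≤ w') :
    (Nat.digits p w).length - 1 + 1 ≤ k ∧
      ℓ * p ^ (k - ((Nat.digits p w).length - 1) - 1) < ν := by
  have hk := pos_of_lt_pow hℓ hℓlt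
  have hℓν := lt_of_minimal hp h1 hco hℓ hℓlt hfac hcf hmin
  have hwk : w < p ^ k - 1 := by
    refine Nat.lt_of_mul_lt_mul_left (a := ν) ?_
    rw [hfac, mul_comm ν]
    exact Nat.mul_lt_mul_of_pos_left hℓν (by have := one_lt_pow hk.ne' hp.one_lt; omega)
  set e := (Nat.digits p w).length - 1
  have hlen : (Nat.digits p w).length ≤ k := (digits_length_le_iff hp.one_lt w).mpr (by omega)
  have hwe : w < p ^ (e + 1) :=
    (lt_base_pow_length_digits hp.one_lt).trans_le (pow_le_pow_right₀ hp.one_lt.le (by omega))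
  refine ⟨by omega, Nat.lt_of_mul_lt_mul_right (a := w) ?_⟩
  calc ℓ * p ^ (k - e - 1) * w = ℓ * (p ^ (k - e - 1) * w) := mul_assoc _ _ _
    _ < ℓ * (p ^ k - 1) :=
        Nat.mul_lt_mul_of_pos_left (pow_sub_mul_lt_pow_sub_one hp.one_lt (by omega) hwe hwk) hℓ
    _ = ν * w := by rw [hfac, mul_comm]

theorem shift_factor_bound (p ν w k ℓ : ℕ) (hp : p.Prime)
    (h1 : 1 < ν) (hco : Nat.Coprime ν p)
    (hw : 0 < w) (hk : 0 < k) (hℓ : 0 < ℓ) (hℓlt : ℓ < p ^ k)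
    (hfac : ν * w = (p ^ k - 1) * ℓ)
    (hcf : digitSum p (ν * w) = digitSum p ν * digitSum p w)
    (hmin : ∀ w' k' ℓ' : ℕ, 0 < w' → 0 < k' → 0 < ℓ' → ℓ' < p ^ k' →
      ν * w' = (p ^ k' - 1) * ℓ' →
      digitSum p (ν * w') = digitSum p ν * digitSum p w' → w ≤ w') :
    (Nat.digits p w).length - 1 + 1 ≤ k ∧
      ℓ * p ^ (k - ((Nat.digits p w).length - 1) - 1) < ν :=
  shift_factor_bound_general p ν w k ℓ hp h1 hco hℓ hℓlt hfac hcf hmin
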